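/- Let A be the nilpotent Matsuo algebra of a connected Fischer space over a field k of characteristic 2, and let s be the sum of all points. Then the annihilator Ann(A) = {a ∈ A : a·b = 0 for all b ∈ A} is exactly the one-dimensional subspace spanned by s. -/

import Mathlib

/-- A partial triple system, given by a collinearity relation `col` and a map `third`
sending two distinct collinear points to the third point on their line. -/
structure IsPTS {P : Type*} (col : P → P → Prop) (third : P → P → P) : Prop where
  symm : ∀ x y, col x y → col y x
  irrefl : ∀ x, ¬ col x x
  third_symm : ∀ x y, col x y → third x y = third y x
  col_third : ∀ x y, col x y → col x (third x y)
  third_ne_left : ∀ x y, col x y → third x y ≠ x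
  third_ne_right : ∀ x y, col x y → third x y ≠ y
  third_third : ∀ x y, col x y → third x (third x y) = y
  unique_line : ∀ x y u v, col x y → col u v →
    x ∈ ({u, v, third u v} : Set P) → y ∈ ({u, v, third u v} : Set P) →
    ({x, y, third x y} : Set P) = {u, v, third u v}

/-- A subspace of a partial triple system: a set of points closed under taking
the third point of a line through two of its points. -/
def IsSubspace {P : Type*} (col : P → P → Prop) (third : P → P → P) (S : Set P) : Prop :=
  ∀ x ∈ S, ∀ y ∈ S, col x y → third x y ∈ S

/-- The subspace generated by a set of points. -/
def fclosure {P : Type*} (col : P → P → Prop) (third : P → P → P) (T : Set P) : Set P :=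
  ⋂₀ {S | T ⊆ S ∧ IsSubspace col third S}

/-- The line through two distinct collinear points, as a set. -/
def lineSet {P : Type*} (third : P → P → P) (x y : P) : Set P := {x, y, third x y}

/-- The six points of the complete quadrilateral (dual affine plane of order 2). -/
inductive CQPt | A | B | C | X | Y | Z
deriving DecidableEq

/-- The "opposite point" involution of the complete quadrilateral. -/
def CQPt.opp : CQPt → CQPt
  | .A => .X | .X => .A | .B => .Y | .Y => .B | .C => .Z | .Z => .C

/-- Collinearity in the complete quadrilateral with lines
{A,B,C}, {A,Y,Z}, {B,X,Z}, {C,X,Y}: two points are collinear iff they are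
distinct and not opposite. -/
def CQPt.col (p q : CQPt) : Prop := p ≠ q ∧ q ≠ p.opp

/-- The third point on the line through two distinct collinear points of the
complete quadrilateral. -/
def CQPt.third : CQPt → CQPt → CQPt
  | .A, .B => .C | .B, .A => .C | .A, .C => .B | .C, .A => .B | .B, .C => .A | .C, .B => .A
  | .A, .Y => .Z | .Y, .A => .Z | .A, .Z => .Y | .Z, .A => .Y | .Y, .Z => .A | .Z, .Y => .A
  | .B, .X => .Z | .X, .B => .Z | .B, .Z => .X | .Z, .B => .X | .X, .Z => .B | .Z, .X => .B
  | .C, .X => .Y | .X, .C => .Y | .C, .Y => .X | .Y, .C => .X | .X, .Y => .C | .Y, .X => .C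
  | p, _ => p

/-- A set of points is a complete quadrilateral if it is the isomorphic image of
the standard one (preserving collinearity and the `third` operation). -/
def IsCQSet {P : Type*} (col : P → P → Prop) (third : P → P → P) (S : Set P) : Prop :=
  ∃ f : CQPt → P, Function.Injective f ∧ Set.range f = S ∧
    (∀ u v, col (f u) (f v) ↔ CQPt.col u v) ∧
    (∀ u v, CQPt.col u v → f (CQPt.third u v) = third (f u) (f v))

/-- A set of points is an affine plane of order 3 if it is the isomorphic image of
`AG(2,3)` (any two distinct points collinear, third point `-(u+v)`). -/
def IsAPSet {P : Type*} (col : P → P → Prop) (third : P → P → P) (S : Set P) : Prop :=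
  ∃ f : ZMod 3 × ZMod 3 → P, Function.Injective f ∧ Set.range f = S ∧
    (∀ u v, col (f u) (f v) ↔ u ≠ v) ∧
    (∀ u v, u ≠ v → f (-(u + v)) = third (f u) (f v))

/-- A Fischer space: a partial triple system in which the subspace generated by two
distinct intersecting lines is a complete quadrilateral or an affine plane of order 3. -/
structure IsFischer {P : Type*} (col : P → P → Prop) (third : P → P → P)
    extends IsPTS col third : Prop where
  dichotomy : ∀ x y u v, col x y → col u v →
    lineSet third x y ≠ lineSet third u v →
    (lineSet third x y ∩ lineSet third u v).Nonempty →
    IsCQSet col third (fclosure col third (lineSet third x y ∪ lineSet third u v)) ∨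
    IsAPSet col third (fclosure col third (lineSet third x y ∪ lineSet third u v))

/-- A Fischer space of symplectic type: the subspace generated by two distinct
intersecting lines is always a complete quadrilateral. -/
structure IsSymplectic {P : Type*} (col : P → P → Prop) (third : P → P → P)
    extends IsPTS col third : Prop where
  cq : ∀ x y u v, col x y → col u v →
    lineSet third x y ≠ lineSet third u v →
    (lineSet third x y ∩ lineSet third u v).Nonempty →
    IsCQSet col third (fclosure col third (lineSet third x y ∪ lineSet third u v))

/-- `A` is the nilpotent Matsuo algebra (char 2) of the geometry `(col, third)`,
with `e` the natural basis indexed by the points. -/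
structure IsNilMatsuo (R : Type*) {A P : Type*} [CommRing R] [NonUnitalNonAssocCommRing A]
    [Module R A] (col : P → P → Prop) (third : P → P → P) (e : P → A) : Prop where
  char2 : (2 : R) = 0
  mul_same : ∀ p, e p * e p = 0
  mul_of_not_col : ∀ p q, p ≠ q → ¬ col p q → e p * e q = 0
  mul_of_col : ∀ p q, p ≠ q → col p q → e p * e q = e p + e q + e (third p q)

/-!
Write `a = ∑ c_p e_p`; for `p ∼ q` let `p'` be the third point of the line `pq`. Then `a · e_q`
has coefficient `c_p + c_{p'}` at `e_p` and `∑_{p ∼ q} c_p` at `e_q`. If `a` annihilates `A` and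
`r` is the third point of a line `pq`, reading off the coefficient of `e_p` in `a · e_q` and of
`e_q` in `a · e_p` gives `c_p + c_r = 0 = c_q + c_r`, so `c` is constant along lines and hence, by
connectedness, `a` is a multiple of `s`. Conversely `p ↦ p'` is a fixed-point-free involution of
the points collinear with `q`, so there is an even number of them, and in characteristic 2 every
coefficient of `s · e_q` vanishes.
-/

section

open Finset

variable {P : Type*} {col : P → P → Prop} {third : P → P → P}

open Classical in
noncomputable def collinearPoints [Fintype P] (col : P → P → Prop) (q : P) : Finset P :=
  {p | col p q}

lemma mem_collinearPoints [Fintype P] {p q : P} : p ∈ collinearPoints col q ↔ col p q := by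
  simp [collinearPoints]

namespace IsPTS

variable {p q : P}

lemma ne_of_col (h : IsPTS col third) (hpq : col p q) : p ≠ q :=
  fun hpq' => h.irrefl q (hpq' ▸ hpq)

lemma col_third_left (h : IsPTS col third) (hpq : col p q) : col (third q p) q :=
  h.symm _ _ (h.col_third q p (h.symm _ _ hpq))

lemma third_third_of_col (h : IsPTS col third) (hpq : col p q) : third q (third q p) = p :=
  h.third_third q p (h.symm _ _ hpq)

variable [Fintype P]

lemma sum_collinearPoints_comp_third (h : IsPTS col third) {M : Type*} [AddCommMonoid M]
    (f : P → M) (q : P) :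
    ∑ p ∈ collinearPoints col q, f (third q p) = ∑ p ∈ collinearPoints col q, f p := by
  refine sum_nbij' (third q ·) (third q ·) ?_ ?_ ?_ ?_ fun _ _ => rfl <;>
    intro p hp <;> rw [mem_collinearPoints] at hp
  exacts [mem_collinearPoints.2 (h.col_third_left hp), mem_collinearPoints.2 (h.col_third_left hp),
    h.third_third_of_col hp, h.third_third_of_col hp]

lemma natCast_card_collinearPoints (h : IsPTS col third) {R : Type*} [AddCommMonoidWithOne R]
    (h2 : (2 : R) = 0) (q : P) : (#(collinearPoints col q) : R) = 0 := by
  rw [card_eq_sum_ones, Nat.cast_sum, Nat.cast_one]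
  refine sum_involution (fun p _ => third q p) (fun _ _ => one_add_one_eq_two.trans h2)
    (fun p hp _ => ?_) (fun p hp => ?_) (fun p hp => ?_) <;> rw [mem_collinearPoints] at hp
  exacts [h.third_ne_right q p (h.symm _ _ hp), mem_collinearPoints.2 (h.col_third_left hp),
    h.third_third_of_col hp]

end IsPTS

lemma Module.Basis.mem_span_sum_of_repr_eq {ι R M : Type*} [Fintype ι] [Semiring R]
    [AddCommMonoid M] [Module R M] (b : Module.Basis ι R M) {x : M}
    (hx : ∀ i j, b.repr x i = b.repr x j) : x ∈ Submodule.span R {∑ i, b i} := by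
  rcases isEmpty_or_nonempty ι with hι | ⟨⟨i₀⟩⟩
  · rw [← b.sum_repr x, univ_eq_empty, sum_empty]
    exact zero_mem _
  · refine Submodule.mem_span_singleton.2 ⟨b.repr x i₀, ?_⟩
    conv_rhs => rw [← b.sum_repr x]
    exact smul_sum.trans (sum_congr rfl fun i _ => by rw [hx i₀ i])

namespace IsNilMatsuo

variable {R A : Type*} [CommRing R] [NonUnitalNonAssocCommRing A] [Module R A]
  [IsScalarTower R A A] {e : P → A}

open Classical in
lemma smul_mul_basis (hP : IsPTS col third) (hM : IsNilMatsuo R col third e) (c : R) (p q : P) :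
    (c • e p) * e q = if col p q then c • (e p + e q + e (third q p)) else 0 := by
  rw [smul_mul_assoc]
  split_ifs with hpq
  · rw [hM.mul_of_col p q (hP.ne_of_col hpq) hpq, hP.third_symm p q hpq]
  · rcases eq_or_ne p q with rfl | hne
    · rw [hM.mul_same, smul_zero]
    · rw [hM.mul_of_not_col p q hne hpq, smul_zero]

variable [Fintype P]

lemma sum_smul_mul (hP : IsPTS col third) (hM : IsNilMatsuo R col third e) (c : P → R) (q : P) :
    (∑ p, c p • e p) * e q =
      ∑ p ∈ collinearPoints col q, (c p + c (third q p)) • e p +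
        (∑ p ∈ collinearPoints col q, c p) • e q := by
  set N := collinearPoints col q
  have hthird : ∑ p ∈ N, c p • e (third q p) = ∑ p ∈ N, c (third q p) • e p := by
    rw [← hP.sum_collinearPoints_comp_third (fun p => c (third q p) • e p) q]
    exact sum_congr rfl fun p hp => by
      rw [hP.third_third_of_col (mem_collinearPoints.1 hp)]
  calc (∑ p, c p • e p) * e q
      = ∑ p ∈ N, (c p • e p + c p • e q + c p • e (third q p)) := by
        simp only [sum_mul, smul_mul_basis hP hM, smul_add, N, collinearPoints, sum_filter]
    _ = ∑ p ∈ N, (c p + c (third q p)) • e p + (∑ p ∈ N, c p) • e q := by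
        simp only [sum_add_distrib, hthird, add_smul, sum_smul]
        abel

lemma sum_basis_mul_basis (hP : IsPTS col third) (hM : IsNilMatsuo R col third e) (q : P) :
    (∑ p, e p) * e q = 0 := by
  simpa only [one_smul, one_add_one_eq_two, hM.char2, zero_smul, sum_const_zero, zero_add,
    sum_const, nsmul_eq_mul, mul_one, hP.natCast_card_collinearPoints hM.char2]
    using sum_smul_mul hP hM (fun _ => 1) q

lemma sum_basis_mul [SMulCommClass R A A] (hP : IsPTS col third) (b : Module.Basis P R A)
    (hM : IsNilMatsuo R col third b) (x : A) : (∑ p, b p) * x = 0 := by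
  rw [← b.sum_repr x, mul_sum]
  exact sum_eq_zero fun q _ => by rw [mul_smul_comm, sum_basis_mul_basis hP hM, smul_zero]

lemma repr_mul_basis_of_col (hP : IsPTS col third) (b : Module.Basis P R A)
    (hM : IsNilMatsuo R col third b) (a : A) {p q : P} (hpq : col p q) :
    b.repr (a * b q) p = b.repr a p + b.repr a (third q p) := by
  conv_lhs => rw [← b.sum_repr a, sum_smul_mul hP hM]
  classical
  simp [Finsupp.single_apply, ← ite_add_zero, mem_collinearPoints.2 hpq, hP.ne_of_col hpq]

lemma repr_eq_of_col (hP : IsPTS col third) (b : Module.Basis P R A)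
    (hM : IsNilMatsuo R col third b) {a : A} (ha : ∀ x, a * x = 0) {p q : P} (hpq : col p q) :
    b.repr a p = b.repr a q := by
  have hp := repr_mul_basis_of_col hP b hM a hpq
  have hq := repr_mul_basis_of_col hP b hM a (hP.symm p q hpq)
  rw [ha, map_zero, Finsupp.zero_apply] at hp hq
  rw [hP.third_symm p q hpq] at hq
  linear_combination hq - hp

end IsNilMatsuo

end

/-- For the nilpotent Matsuo algebra of a connected Fischer space (with finite point
set) over a field of characteristic 2, the annihilator `{a | a·b = 0 for all b}` is
exactly the span of the sum `s` of all points. -/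
theorem stmt6 {k A P : Type*} [Field k] [NonUnitalNonAssocCommRing A]
    [Module k A] [SMulCommClass k A A] [IsScalarTower k A A] [Fintype P]
    (col : P → P → Prop) (third : P → P → P)
    (hF : IsFischer col third)
    (hconn : ∀ x y : P, Relation.ReflTransGen col x y)
    (e : Module.Basis P k A) (hM : IsNilMatsuo k col third ⇑e) :
    {a : A | ∀ b : A, a * b = 0} =
      (Submodule.span k ({∑ p : P, e p} : Set A) : Set A) := by
  ext a
  rw [Set.mem_ofPred_eq, SetLike.mem_coe]
  constructor
  · intro ha
    refine e.mem_span_sum_of_repr_eq fun x y => ?_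
    induction hconn x y with
    | refl => rfl
    | tail _ hyz ih => exact ih.trans (hM.repr_eq_of_col hF.toIsPTS e ha hyz)
  · intro ha b
    obtain ⟨t, rfl⟩ := Submodule.mem_span_singleton.1 ha
    rw [smul_mul_assoc, hM.sum_basis_mul hF.toIsPTS e b, smul_zero]
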